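/- arXiv:1305.4274 — 5 statements merged into one kernel-verified Lean document; each statement's English description precedes it below -/
import Mathlib

section
/- For a Poisson random variable Z_ε with parameter ε and a bounded function f : ℕ → ℝ, the derivative with respect to ε of E[f(Z_ε)] equals E[f(Z_ε + 1)] − E[f(Z_ε)]. -/
/-!
Writing the expectation as `e^{-t} S(t)` with `S(t) = ∑ f(m) t^m / m!`, boundedness of `f` makes
`S` an entire series that may be differentiated term by term, and the shift `m ↦ m + 1` turns
`S'(t) = ∑ f(m) m t^(m-1) / m!` into `∑ f(m+1) t^m / m!`. The product rule then gives
`e^{-t} (S'(t) - S(t))`.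
-/

theorem cast_succ_mul_pow_div_factorial_succ (x : ℝ) (m : ℕ) :
    ((m + 1 : ℕ) : ℝ) * x ^ m / (m + 1).factorial = x ^ m / m.factorial := by
  rw [Nat.factorial_succ]
  push_cast
  field_simp

theorem summable_natCast_mul_pow_pred_div_factorial (x : ℝ) :
    Summable fun m : ℕ => m * x ^ (m - 1) / m.factorial := by
  rw [← summable_nat_add_iff 1]
  simpa only [Nat.add_sub_cancel, cast_succ_mul_pow_div_factorial_succ] using
    Real.summable_pow_div_factorial x

section BoundedCoefficients

variable {a : ℕ → ℝ} {M : ℝ}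

theorem summable_pow_div_factorial_mul_of_abs_le (ha : ∀ m, |a m| ≤ M) (x : ℝ) :
    Summable fun m => x ^ m / m.factorial * a m := by
  refine .of_norm_bounded ((Real.summable_pow_div_factorial |x|).mul_right M) fun m => ?_
  rw [Real.norm_eq_abs, abs_mul, abs_div, abs_pow, Nat.abs_cast]
  exact mul_le_mul_of_nonneg_left (ha m) (by positivity)

theorem hasDerivAt_tsum_pow_div_factorial_mul (ha : ∀ m, |a m| ≤ M) (x : ℝ) :
    HasDerivAt (fun t => ∑' m, t ^ m / m.factorial * a m)
      (∑' m, x ^ m / m.factorial * a (m + 1)) x := by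
  have hderiv (m : ℕ) (y : ℝ) : HasDerivAt (fun t => t ^ m / m.factorial * a m)
      (m * y ^ (m - 1) / m.factorial * a m) y :=
    ((hasDerivAt_pow m y).div_const _).mul_const _
  have hbound (m : ℕ) (y : ℝ) (hy : y ∈ Metric.ball x 1) :
      ‖m * y ^ (m - 1) / m.factorial * a m‖ ≤ M * (m * (|x| + 1) ^ (m - 1) / m.factorial) := by
    have hyx : |y| ≤ |x| + 1 := by
      have := abs_sub_abs_le_abs_sub y x
      rw [Metric.mem_ball, Real.dist_eq] at hy
      linarith
    rw [Real.norm_eq_abs, abs_mul, abs_div, abs_mul, abs_pow, Nat.abs_cast, Nat.abs_cast, mul_comm M]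
    gcongr
    exact ha m
  have hshift : ∑' m : ℕ, (m : ℝ) * x ^ (m - 1) / m.factorial * a m
      = ∑' m, x ^ m / m.factorial * a (m + 1) := by
    rw [tsum_eq_zero_add']
    · simp only [Nat.add_sub_cancel, cast_succ_mul_pow_div_factorial_succ, Nat.cast_zero,
        zero_mul, zero_div, zero_add]
    · simpa only [Nat.add_sub_cancel, cast_succ_mul_pow_div_factorial_succ] using
        summable_pow_div_factorial_mul_of_abs_le (fun m => ha (m + 1)) x
  rw [← hshift]
  exact hasDerivAt_tsum_of_isPreconnected
    ((summable_natCast_mul_pow_pred_div_factorial (|x| + 1)).mul_left M) Metric.isOpen_ball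
    (convex_ball x 1).isPreconnected (fun m y _ => hderiv m y) hbound
    (Metric.mem_ball_self one_pos) (summable_pow_div_factorial_mul_of_abs_le ha x)
    (Metric.mem_ball_self one_pos)

end BoundedCoefficients

theorem poisson_expectation_deriv_general
    (f : ℕ → ℝ) (M : ℝ) (hf : ∀ m, |f m| ≤ M) (ε : ℝ) :
    HasDerivAt
      (fun t : ℝ => ∑' m : ℕ, Real.exp (-t) * t ^ m / (Nat.factorial m) * f m)
      ((∑' m : ℕ, Real.exp (-ε) * ε ^ m / (Nat.factorial m) * f (m + 1)) -
        ∑' m : ℕ, Real.exp (-ε) * ε ^ m / (Nat.factorial m) * f m) ε := by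
  have hfactor (g : ℕ → ℝ) (t : ℝ) : ∑' m : ℕ, Real.exp (-t) * t ^ m / (Nat.factorial m) * g m
      = Real.exp (-t) * ∑' m : ℕ, t ^ m / m.factorial * g m := by
    rw [← tsum_mul_left]
    congr with m
    ring
  simp only [hfactor]
  exact ((hasDerivAt_neg ε).exp.mul (hasDerivAt_tsum_pow_div_factorial_mul hf ε)).congr_deriv
    (by ring)

/-- For `Z_ε` Poisson of parameter `ε` and bounded `f : ℕ → ℝ`,
`d/dε E[f(Z_ε)] = E[f(Z_ε + 1)] - E[f(Z_ε)]`. -/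
theorem poisson_expectation_deriv
    (f : ℕ → ℝ) (M : ℝ) (hf : ∀ m, |f m| ≤ M) (ε : ℝ) (hε : 0 < ε) :
    HasDerivAt
      (fun t : ℝ => ∑' m : ℕ, Real.exp (-t) * t ^ m / (Nat.factorial m) * f m)
      ((∑' m : ℕ, Real.exp (-ε) * ε ^ m / (Nat.factorial m) * f (m + 1)) -
        ∑' m : ℕ, Real.exp (-ε) * ε ^ m / (Nat.factorial m) * f m) ε :=
  poisson_expectation_deriv_general f M hf ε
end

section
/- For any C, D ∈ ℝ and l ≥ 1, the Fourier–Walsh transform of v ↦ C^{l−|v|}D^{|v|} + D^{l−|v|}C^{|v|} at w ∈ 𝔽₂^l equals (C+D)^{l−|w|}(C−D)^{|w|}(1 + (−1)^{|w|}); in particular it vanishes when |w| is odd and is nonnegative when C, D ≥ 0. -/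
/-- Hamming weight of a vector in 𝔽₂^l. -/
def wt {l : ℕ} (v : Fin l → ZMod 2) : ℕ := ∑ i, (v i).val

/-- The character `(-1)^{v·w}` on 𝔽₂^l. -/
noncomputable def chi {l : ℕ} (v w : Fin l → ZMod 2) : ℝ :=
  (-1 : ℝ) ^ (∑ i, (v i * w i).val)

/-- Fourier–Walsh transform `F(g)(w) = Σ_v g(v) (−1)^{v·w}`. -/
noncomputable def FW {l : ℕ} (g : (Fin l → ZMod 2) → ℝ) (w : Fin l → ZMod 2) : ℝ :=
  ∑ v : Fin l → ZMod 2, g v * chi v w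

/-!
The function `v ↦ C^{l−|v|} D^{|v|}` is the tensor product of `l` copies of the function
`a ↦ (C if a = 0, D if a = 1)` on `𝔽₂`, so its Walsh transform is the tensor product of the
one-dimensional transforms, which take the values `C + D` at `0` and `C − D` at `1`. Swapping
`C` and `D` only changes the sign of `C − D`, which contributes the factor `(−1)^{|w|}`.
-/

open Finset

lemma ZMod.two_eq_zero_or_eq_one (a : ZMod 2) : a = 0 ∨ a = 1 := by
  revert a; decide

lemma ZMod.sum_univ_two {M : Type*} [AddCommMonoid M] (F : ZMod 2 → M) :
    ∑ a, F a = F 0 + F 1 :=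
  Fin.sum_univ_two F

lemma ZMod.two_apply_eq_pow_mul_pow {M : Type*} [CommMonoid M] (f : ZMod 2 → M) (a : ZMod 2) :
    f a = f 0 ^ (1 - a.val) * f 1 ^ a.val := by
  rcases a.two_eq_zero_or_eq_one with rfl | rfl <;> simp [ZMod.val_one]

lemma ZMod.val_two_le_one (a : ZMod 2) : a.val ≤ 1 :=
  Nat.le_of_lt_succ a.val_lt

lemma prod_apply_eq_pow_mul_pow_wt {M : Type*} [CommMonoid M] {l : ℕ} (f : ZMod 2 → M)
    (v : Fin l → ZMod 2) : ∏ i, f (v i) = f 0 ^ (l - wt v) * f 1 ^ wt v := by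
  have hcompl : ∑ i, (1 - (v i).val) = l - wt v := by
    rw [sum_tsub_distrib _ fun i _ => ZMod.val_two_le_one (v i)]
    simp [wt]
  rw [← hcompl, wt, ← prod_pow_eq_pow_sum, ← prod_pow_eq_pow_sum, ← prod_mul_distrib]
  exact prod_congr rfl fun i _ => ZMod.two_apply_eq_pow_mul_pow f (v i)

lemma FW_add {l : ℕ} (g h : (Fin l → ZMod 2) → ℝ) (w : Fin l → ZMod 2) :
    FW (fun v => g v + h v) w = FW g w + FW h w := by
  simp only [FW, add_mul, sum_add_distrib]

lemma FW_prod_apply {l : ℕ} (f : ZMod 2 → ℝ) (w : Fin l → ZMod 2) :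
    FW (fun v => ∏ i, f (v i)) w = ∏ i, ∑ a : ZMod 2, f a * (-1) ^ (a * w i).val := by
  simp only [FW, chi, ← prod_pow_eq_pow_sum, ← prod_mul_distrib]
  exact (Fintype.prod_sum fun i a => f a * (-1) ^ (a * w i).val).symm

lemma FW_pow_mul_pow_wt {l : ℕ} (C D : ℝ) (w : Fin l → ZMod 2) :
    FW (fun v => C ^ (l - wt v) * D ^ wt v) w = (C + D) ^ (l - wt w) * (C - D) ^ wt w := by
  let f : ZMod 2 → ℝ := fun a => if a = 0 then C else D
  let g : ZMod 2 → ℝ := fun b => if b = 0 then C + D else C - D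
  have hf : ∀ v : Fin l → ZMod 2, C ^ (l - wt v) * D ^ wt v = ∏ i, f (v i) := fun v => by
    simp [prod_apply_eq_pow_mul_pow_wt f v, f]
  have hg : ∀ b : ZMod 2, ∑ a : ZMod 2, f a * (-1) ^ (a * b).val = g b := by
    intro b
    rw [ZMod.sum_univ_two]
    rcases b.two_eq_zero_or_eq_one with rfl | rfl <;> simp [f, g, ZMod.val_one, sub_eq_add_neg]
  simp only [hf, FW_prod_apply, hg]
  simp [prod_apply_eq_pow_mul_pow_wt g w, g]

theorem walsh_transform_symmetric_pair_general
    (l : ℕ) (C D : ℝ) (w : Fin l → ZMod 2) :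
    FW (fun v => C ^ (l - wt v) * D ^ (wt v) + D ^ (l - wt v) * C ^ (wt v)) w
        = (C + D) ^ (l - wt w) * (C - D) ^ (wt w) * (1 + (-1 : ℝ) ^ (wt w))
      ∧ (Odd (wt w) →
          FW (fun v => C ^ (l - wt v) * D ^ (wt v) + D ^ (l - wt v) * C ^ (wt v)) w = 0)
      ∧ (0 ≤ C → 0 ≤ D →
          0 ≤ FW (fun v => C ^ (l - wt v) * D ^ (wt v) + D ^ (l - wt v) * C ^ (wt v)) w) := by
  have hFW : FW (fun v => C ^ (l - wt v) * D ^ (wt v) + D ^ (l - wt v) * C ^ (wt v)) w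
      = (C + D) ^ (l - wt w) * (C - D) ^ (wt w) * (1 + (-1 : ℝ) ^ (wt w)) := by
    have hswap : (D - C) ^ wt w = (-1) ^ wt w * (C - D) ^ wt w := by
      rw [← mul_pow, neg_one_mul, neg_sub]
    rw [FW_add, FW_pow_mul_pow_wt, FW_pow_mul_pow_wt, add_comm D C, hswap]
    ring
  refine ⟨hFW, fun hodd => by rw [hFW, hodd.neg_one_pow, add_neg_cancel, mul_zero],
    fun hC hD => ?_⟩
  rw [hFW]
  rcases Nat.even_or_odd (wt w) with heven | hodd
  · rw [heven.neg_one_pow]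
    have := heven.pow_nonneg (C - D)
    positivity
  · rw [hodd.neg_one_pow, add_neg_cancel, mul_zero]

/-- The Fourier–Walsh transform of `v ↦ C^{l−|v|} D^{|v|} + D^{l−|v|} C^{|v|}` equals
`(C+D)^{l−|w|} (C−D)^{|w|} (1 + (−1)^{|w|})`; it vanishes at odd-weight `w` and is
nonnegative when `C, D ≥ 0`. -/
theorem walsh_transform_symmetric_pair
    (l : ℕ) (hl : 1 ≤ l) (C D : ℝ) (w : Fin l → ZMod 2) :
    FW (fun v => C ^ (l - wt v) * D ^ (wt v) + D ^ (l - wt v) * C ^ (wt v)) w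
        = (C + D) ^ (l - wt w) * (C - D) ^ (wt w) * (1 + (-1 : ℝ) ^ (wt w))
      ∧ (Odd (wt w) →
          FW (fun v => C ^ (l - wt v) * D ^ (wt v) + D ^ (l - wt v) * C ^ (wt v)) w = 0)
      ∧ (0 ≤ C → 0 ≤ D →
          0 ≤ FW (fun v => C ^ (l - wt v) * D ^ (wt v) + D ^ (l - wt v) * C ^ (wt v)) w) :=
  walsh_transform_symmetric_pair_general l C D w
end

section
/- Let Z = (Z_1, …, Z_m) be discrete random variables that are conditionally independent given (X, Y), with each Z_j conditionally depending only on (X_{i_j}, X_{k_j}, Y_j). Then H(Z|Y) − H(Z|X,Y) ≤ Σ_{j=1}^m [H(Z_j|Y_j) − H(Z_j|X_{i_j}, X_{k_j}, Y_j)]. -/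
/-!
The factorisation hypotheses say that `P(Z | X, Y) = ∏ⱼ κⱼ` and, after marginalising,
`P(Zⱼ | X_{iⱼ}, X_{kⱼ}, Yⱼ) = κⱼ`; hence `H(Z | X, Y) = ∑ⱼ H(Zⱼ | X_{iⱼ}, X_{kⱼ}, Yⱼ)` exactly.
What remains is `H(Z | Y) ≤ ∑ⱼ H(Zⱼ | Yⱼ)`, which is Gibbs' inequality against the
kernel `∏ⱼ P(Zⱼ | Yⱼ)`.
-/

/-- Probability of an event under a mass function on a finite space. -/
def pr {Ω : Type} [Fintype Ω] (p : Ω → ℝ) (s : Ω → Prop) [DecidablePred s] : ℝ :=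
  ∑ ω ∈ Finset.univ.filter s, p ω

/-- Shannon conditional entropy `H(X|Y)` on a finite probability space. -/
noncomputable def condEnt {Ω α β : Type} [Fintype Ω] [Fintype α] [Fintype β]
    [DecidableEq α] [DecidableEq β] (p : Ω → ℝ) (X : Ω → α) (Y : Ω → β) : ℝ :=
  -∑ x : α, ∑ y : β,
    (∑ ω ∈ Finset.univ.filter (fun ω => X ω = x ∧ Y ω = y), p ω) *
      Real.log ((∑ ω ∈ Finset.univ.filter (fun ω => X ω = x ∧ Y ω = y), p ω) /
        (∑ ω ∈ Finset.univ.filter (fun ω => Y ω = y), p ω))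

open Finset Real

/-- `P(X = a | Y = b)`, which is `0` when `P(Y = b) = 0`. -/
noncomputable def condProb {Ω α β : Type} [Fintype Ω] [DecidableEq α] [DecidableEq β]
    (p : Ω → ℝ) (X : Ω → α) (Y : Ω → β) (a : α) (b : β) : ℝ :=
  pr p (fun ω => X ω = a ∧ Y ω = b) / pr p (fun ω => Y ω = b)

/-- `log x ≤ x - 1` at `x = r v / u`. -/
lemma mul_log_sub_mul_log_div_le {u v r : ℝ} (hu : 0 ≤ u) (huv : u ≤ v) (hr : 0 ≤ r)
    (hr_pos : 0 < u → 0 < r) : u * log r - u * log (u / v) ≤ r * v - u := by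
  rcases hu.eq_or_lt with rfl | hu
  · simpa using mul_nonneg hr huv
  have hv : 0 < v := hu.trans_le huv
  have hr := hr_pos hu
  have key : log r - log (u / v) ≤ r * v / u - 1 := by
    rw [← log_div hr.ne' (by positivity)]
    convert log_le_sub_one_of_pos (show 0 < r * v / u by positivity) using 2
    field_simp
  calc u * log r - u * log (u / v) = u * (log r - log (u / v)) := by ring
    _ ≤ u * (r * v / u - 1) := by gcongr
    _ = r * v - u := by field_simp

section Probability

variable {Ω : Type} [Fintype Ω] (p : Ω → ℝ)

lemma pr_congr {s t : Ω → Prop} [DecidablePred s] [DecidablePred t]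
    (h : ∀ ω, s ω ↔ t ω) : pr p s = pr p t := by
  simp only [pr, h]

lemma pr_eq_zero {s : Ω → Prop} [DecidablePred s] (h : ∀ ω, ¬ s ω) : pr p s = 0 := by
  simp [pr, h]

variable {p}

lemma pr_nonneg (hp0 : ∀ ω, 0 ≤ p ω) (s : Ω → Prop) [DecidablePred s] : 0 ≤ pr p s :=
  sum_nonneg fun ω _ => hp0 ω

lemma pr_mono (hp0 : ∀ ω, 0 ≤ p ω) {s t : Ω → Prop} [DecidablePred s] [DecidablePred t]
    (h : ∀ ω, s ω → t ω) : pr p s ≤ pr p t :=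
  sum_le_sum_of_subset_of_nonneg (fun ω => by simpa using h ω) fun ω _ _ => hp0 ω

lemma pr_pos_of_pos (hp0 : ∀ ω, 0 ≤ p ω) {s : Ω → Prop} [DecidablePred s] {ω : Ω}
    (hω : 0 < p ω) (hs : s ω) : 0 < pr p s :=
  hω.trans_le <| single_le_sum (fun ω _ => hp0 ω) (by simpa using hs)

variable (p)

lemma sum_pr_mul_eq_sum {γ : Type} [Fintype γ] [DecidableEq γ] (W : Ω → γ) (f : γ → ℝ) :
    ∑ c, pr p (fun ω => W ω = c) * f c = ∑ ω, p ω * f (W ω) := by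
  simp only [pr, sum_filter, sum_mul]
  rw [sum_comm]
  simp

lemma sum_pr_and_eq {γ : Type} [Fintype γ] [DecidableEq γ] (W : Ω → γ)
    (s : Ω → Prop) [DecidablePred s] : ∑ c, pr p (fun ω => W ω = c ∧ s ω) = pr p s := by
  simp only [pr, sum_filter]
  rw [sum_comm]
  refine sum_congr rfl fun ω _ => ?_
  by_cases hs : s ω <;> simp [hs]

/-- Marginalisation of a conditional law that depends on `W` only through `f W`. -/
lemma pr_and_comp_eq_mul {α γ δ : Type} [Fintype γ] [DecidableEq α] [DecidableEq γ]
    [DecidableEq δ] (V : Ω → α) (W : Ω → γ) (f : γ → δ) (q : δ → α → ℝ)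
    (h : ∀ a w, pr p (fun ω => V ω = a ∧ W ω = w) = pr p (fun ω => W ω = w) * q (f w) a)
    (a : α) (t : δ) :
    pr p (fun ω => V ω = a ∧ f (W ω) = t) = pr p (fun ω => f (W ω) = t) * q t a := by
  rw [← sum_pr_and_eq p W, ← sum_pr_and_eq p W (fun ω => f (W ω) = t), sum_mul]
  refine sum_congr rfl fun w _ => ?_
  by_cases hw : f w = t
  · subst hw
    have hVW : pr p (fun ω => W ω = w ∧ V ω = a ∧ f (W ω) = f w)
        = pr p (fun ω => V ω = a ∧ W ω = w) :=
      pr_congr p fun ω => ⟨fun ⟨h1, h2, _⟩ => ⟨h2, h1⟩, fun ⟨h1, h2⟩ => ⟨h2, h1, h2 ▸ rfl⟩⟩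
    have hW : pr p (fun ω => W ω = w ∧ f (W ω) = f w) = pr p (fun ω => W ω = w) :=
      pr_congr p fun ω => ⟨And.left, fun h => ⟨h, h ▸ rfl⟩⟩
    rw [hVW, hW, h]
  · rw [pr_eq_zero p fun ω ⟨h1, _, h2⟩ => hw (h1 ▸ h2),
      pr_eq_zero p fun ω ⟨h1, h2⟩ => hw (h1 ▸ h2), zero_mul]

lemma pr_prodMk_eq {γ δ : Type} [DecidableEq γ] [DecidableEq δ] (X : Ω → γ) (Y : Ω → δ)
    (x : γ) (y : δ) :
    pr p (fun ω => (X ω, Y ω) = (x, y)) = pr p (fun ω => X ω = x ∧ Y ω = y) :=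
  pr_congr p fun _ => Prod.mk.injEq _ _ _ _ ▸ Iff.rfl

lemma pr_and_prodMk_eq {α γ δ : Type} [DecidableEq α] [DecidableEq γ] [DecidableEq δ]
    (V : Ω → α) (X : Ω → γ) (Y : Ω → δ) (a : α) (x : γ) (y : δ) :
    pr p (fun ω => V ω = a ∧ (X ω, Y ω) = (x, y))
      = pr p (fun ω => X ω = x ∧ Y ω = y ∧ V ω = a) :=
  pr_congr p fun ω => by rw [Prod.mk.injEq]; tauto

end Probability

section Entropy

variable {Ω α β : Type} [Fintype Ω] [DecidableEq α] [DecidableEq β] {p : Ω → ℝ}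

lemma condProb_pos (hp0 : ∀ ω, 0 ≤ p ω) {X : Ω → α} {Y : Ω → β} {a : α} {b : β}
    (h : 0 < pr p (fun ω => X ω = a ∧ Y ω = b)) : 0 < condProb p X Y a b :=
  div_pos h (h.trans_le (pr_mono hp0 fun _ => And.right))

lemma condProb_nonneg (hp0 : ∀ ω, 0 ≤ p ω) (X : Ω → α) (Y : Ω → β) (a : α) (b : β) :
    0 ≤ condProb p X Y a b :=
  div_nonneg (pr_nonneg hp0 _) (pr_nonneg hp0 _)

lemma sum_condProb_le_one [Fintype α] (X : Ω → α) (Y : Ω → β) (b : β) :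
    ∑ a, condProb p X Y a b ≤ 1 := by
  simp only [condProb, ← sum_div, sum_pr_and_eq]
  exact div_self_le_one _

lemma condProb_eq_of_kernel {X : Ω → α} {Y : Ω → β} {q : β → α → ℝ}
    (hq : ∀ a b, pr p (fun ω => X ω = a ∧ Y ω = b) = pr p (fun ω => Y ω = b) * q b a)
    {a : α} {b : β} (hb : 0 < pr p (fun ω => Y ω = b)) : condProb p X Y a b = q b a := by
  rw [condProb, hq, mul_div_cancel_left₀ _ hb.ne']

variable (p) [Fintype α] [Fintype β]

lemma condEnt_eq_neg_sum_mul_log (X : Ω → α) (Y : Ω → β) :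
    condEnt p X Y = -∑ ω, p ω * log (condProb p X Y (X ω) (Y ω)) := by
  rw [← sum_pr_mul_eq_sum p (fun ω => (X ω, Y ω)) fun c => log (condProb p X Y c.1 c.2),
    Fintype.sum_prod_type]
  simp only [Prod.mk.injEq]
  rfl

variable {p}

lemma condEnt_eq_of_condProb_eq (hp0 : ∀ ω, 0 ≤ p ω) {X : Ω → α} {Y : Ω → β} {g : Ω → ℝ}
    (hg : ∀ ω, 0 < p ω → condProb p X Y (X ω) (Y ω) = g ω) :
    condEnt p X Y = -∑ ω, p ω * log (g ω) := by
  rw [condEnt_eq_neg_sum_mul_log]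
  congr 1
  refine sum_congr rfl fun ω _ => ?_
  rcases (hp0 ω).eq_or_lt with hω | hω
  · simp [← hω]
  · rw [hg ω hω]

/-- Conditional Gibbs inequality for a sub-stochastic kernel `r`. -/
theorem condEnt_le_neg_sum_mul_log (hp0 : ∀ ω, 0 ≤ p ω)
    (X : Ω → α) (Y : Ω → β) (r : β → α → ℝ) (hr0 : ∀ b a, 0 ≤ r b a)
    (hr1 : ∀ b, ∑ a, r b a ≤ 1)
    (hr_pos : ∀ a b, 0 < pr p (fun ω => X ω = a ∧ Y ω = b) → 0 < r b a) :
    condEnt p X Y ≤ -∑ ω, p ω * log (r (Y ω) (X ω)) := by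
  rw [← sum_pr_mul_eq_sum p (fun ω => (X ω, Y ω)) fun c => log (r c.2 c.1),
    Fintype.sum_prod_type]
  simp only [Prod.mk.injEq]
  have hterm : ∀ a b, pr p (fun ω => X ω = a ∧ Y ω = b) * log (r b a)
      - pr p (fun ω => X ω = a ∧ Y ω = b) * log (condProb p X Y a b)
      ≤ r b a * pr p (fun ω => Y ω = b) - pr p (fun ω => X ω = a ∧ Y ω = b) :=
    fun a b => mul_log_sub_mul_log_div_le (pr_nonneg hp0 _)
      (pr_mono hp0 fun _ => And.right) (hr0 b a) (hr_pos a b)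
  have hmass : ∑ a, ∑ b, r b a * pr p (fun ω => Y ω = b)
      ≤ ∑ a, ∑ b, pr p (fun ω => X ω = a ∧ Y ω = b) :=
    calc ∑ a, ∑ b, r b a * pr p (fun ω => Y ω = b)
        = ∑ b, (∑ a, r b a) * pr p (fun ω => Y ω = b) := by rw [sum_comm]; simp only [sum_mul]
      _ ≤ ∑ b, pr p (fun ω => Y ω = b) :=
        sum_le_sum fun b _ => mul_le_of_le_one_left (pr_nonneg hp0 _) (hr1 b)
      _ = ∑ a, ∑ b, pr p (fun ω => X ω = a ∧ Y ω = b) := by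
        rw [sum_comm]; simp only [sum_pr_and_eq]
  have := sum_le_sum fun a (_ : a ∈ univ) => sum_le_sum fun b (_ : b ∈ univ) => hterm a b
  simp only [sum_sub_distrib] at this
  change -∑ a, ∑ b, pr p (fun ω => X ω = a ∧ Y ω = b) * log (condProb p X Y a b) ≤ _
  linarith

lemma sum_condEnt_eq_neg_sum_mul_log_prod (hp0 : ∀ ω, 0 ≤ p ω) {ι γ : Type} [Fintype ι]
    [Fintype γ] [DecidableEq γ] (Z : ι → Ω → α) (W : ι → Ω → γ) :
    ∑ j, condEnt p (Z j) (W j)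
      = -∑ ω, p ω * log (∏ j, condProb p (Z j) (W j) (Z j ω) (W j ω)) := by
  simp only [condEnt_eq_neg_sum_mul_log, sum_neg_distrib]
  rw [sum_comm]
  congr 1
  refine sum_congr rfl fun ω _ => ?_
  rcases (hp0 ω).eq_or_lt with hω | hω
  · simp [← hω]
  · rw [log_prod fun j _ => (condProb_pos hp0 (pr_pos_of_pos hp0 hω ⟨rfl, rfl⟩)).ne', mul_sum]

/-- Subadditivity and "conditioning reduces entropy", `H(Z|Y) ≤ ∑ⱼ H(Zⱼ|Y) ≤ ∑ⱼ H(Zⱼ|Yⱼ)`,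
in one step: Gibbs' inequality for the product kernel `∏ⱼ P(Zⱼ | Yⱼ)`. -/
theorem condEnt_pi_le_sum_condEnt (hp0 : ∀ ω, 0 ≤ p ω) {ι : Type} [Fintype ι] [DecidableEq ι]
    (Z : Ω → ι → α) (Y : Ω → ι → β) :
    condEnt p Z Y ≤ ∑ j, condEnt p (fun ω => Z ω j) (fun ω => Y ω j) := by
  rw [sum_condEnt_eq_neg_sum_mul_log_prod hp0 (fun j ω => Z ω j) (fun j ω => Y ω j)]
  refine condEnt_le_neg_sum_mul_log hp0 Z Y
    (fun y z => ∏ j, condProb p (fun ω => Z ω j) (fun ω => Y ω j) (z j) (y j))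
    (fun y z => prod_nonneg fun j _ => condProb_nonneg hp0 _ _ _ _) (fun y => ?_)
    (fun z y h => prod_pos fun j _ => condProb_pos hp0 (h.trans_le (pr_mono hp0
      fun ω ⟨hz, hy⟩ => ⟨congrFun hz j, congrFun hy j⟩)))
  rw [← Fintype.prod_sum fun j a => condProb p (fun ω => Z ω j) (fun ω => Y ω j) a (y j)]
  exact prod_le_one (fun j _ => sum_nonneg fun a _ => condProb_nonneg hp0 _ _ _ _)
    fun j _ => sum_condProb_le_one _ _ _

end Entropy

theorem cond_indep_entropy_difference_subadditive_general
    {Ω 𝒳 𝒴 𝒵 : Type} [Fintype Ω] [Fintype 𝒳] [Fintype 𝒴] [Fintype 𝒵]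
    [DecidableEq 𝒳] [DecidableEq 𝒴] [DecidableEq 𝒵]
    (n m : ℕ)
    (p : Ω → ℝ) (hp0 : ∀ ω, 0 ≤ p ω)
    (X : Ω → Fin n → 𝒳) (Y : Ω → Fin m → 𝒴) (Z : Ω → Fin m → 𝒵)
    (idx kdx : Fin m → Fin n)
    (κ : Fin m → 𝒳 → 𝒳 → 𝒴 → 𝒵 → ℝ)
    (hdep : ∀ (j : Fin m) (x : Fin n → 𝒳) (y : Fin m → 𝒴) (z : 𝒵),
      pr p (fun ω => X ω = x ∧ Y ω = y ∧ Z ω j = z)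
        = pr p (fun ω => X ω = x ∧ Y ω = y) * κ j (x (idx j)) (x (kdx j)) (y j) z)
    (hindep : ∀ (x : Fin n → 𝒳) (y : Fin m → 𝒴) (z : Fin m → 𝒵),
      pr p (fun ω => X ω = x ∧ Y ω = y ∧ Z ω = z)
        = pr p (fun ω => X ω = x ∧ Y ω = y) *
            ∏ j : Fin m, κ j (x (idx j)) (x (kdx j)) (y j) (z j)) :
    condEnt p Z Y - condEnt p Z (fun ω => (X ω, Y ω))
      ≤ ∑ j : Fin m,
          (condEnt p (fun ω => Z ω j) (fun ω => Y ω j)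
            - condEnt p (fun ω => Z ω j)
                (fun ω => (X ω (idx j), X ω (kdx j), Y ω j))) := by
  have hkernel : ∀ z w, pr p (fun ω => Z ω = z ∧ (X ω, Y ω) = w)
      = pr p (fun ω => (X ω, Y ω) = w) * ∏ j, κ j (w.1 (idx j)) (w.1 (kdx j)) (w.2 j) (z j) := by
    rintro z ⟨x, y⟩
    rw [pr_and_prodMk_eq, pr_prodMk_eq, hindep]
  have hkernel_marginal : ∀ j z t,
      pr p (fun ω => Z ω j = z ∧ (X ω (idx j), X ω (kdx j), Y ω j) = t)
        = pr p (fun ω => (X ω (idx j), X ω (kdx j), Y ω j) = t) * κ j t.1 t.2.1 t.2.2 z :=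
    fun j => pr_and_comp_eq_mul p (fun ω => Z ω j) (fun ω => (X ω, Y ω))
      (fun w => (w.1 (idx j), w.1 (kdx j), w.2 j)) (fun t z => κ j t.1 t.2.1 t.2.2 z)
      (by rintro z ⟨x, y⟩; rw [pr_and_prodMk_eq, pr_prodMk_eq, hdep])
  have hsplit : condEnt p Z (fun ω => (X ω, Y ω))
      = ∑ j, condEnt p (fun ω => Z ω j) (fun ω => (X ω (idx j), X ω (kdx j), Y ω j)) := by
    rw [sum_condEnt_eq_neg_sum_mul_log_prod hp0]
    refine condEnt_eq_of_condProb_eq hp0 fun ω hω => ?_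
    rw [condProb_eq_of_kernel hkernel (pr_pos_of_pos hp0 hω rfl)]
    exact prod_congr rfl fun j _ =>
      (condProb_eq_of_kernel (hkernel_marginal j) (pr_pos_of_pos hp0 hω rfl)).symm
  rw [hsplit, sum_sub_distrib]
  linarith [condEnt_pi_le_sum_condEnt hp0 Z Y]

/-- If `Z₁,…,Z_m` are conditionally independent given `(X,Y)`, with `Z_j` depending
conditionally only on `(X_{i_j}, X_{k_j}, Y_j)` (through a kernel `κ j`), then
`H(Z|Y) − H(Z|X,Y) ≤ Σ_j [H(Z_j|Y_j) − H(Z_j|X_{i_j},X_{k_j},Y_j)]`. -/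
theorem cond_indep_entropy_difference_subadditive
    {Ω 𝒳 𝒴 𝒵 : Type} [Fintype Ω] [Fintype 𝒳] [Fintype 𝒴] [Fintype 𝒵]
    [DecidableEq 𝒳] [DecidableEq 𝒴] [DecidableEq 𝒵]
    (n m : ℕ)
    (p : Ω → ℝ) (hp0 : ∀ ω, 0 ≤ p ω) (hp1 : ∑ ω, p ω = 1)
    (X : Ω → Fin n → 𝒳) (Y : Ω → Fin m → 𝒴) (Z : Ω → Fin m → 𝒵)
    (idx kdx : Fin m → Fin n)
    (κ : Fin m → 𝒳 → 𝒳 → 𝒴 → 𝒵 → ℝ)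
    (hdep : ∀ (j : Fin m) (x : Fin n → 𝒳) (y : Fin m → 𝒴) (z : 𝒵),
      pr p (fun ω => X ω = x ∧ Y ω = y ∧ Z ω j = z)
        = pr p (fun ω => X ω = x ∧ Y ω = y) * κ j (x (idx j)) (x (kdx j)) (y j) z)
    (hindep : ∀ (x : Fin n → 𝒳) (y : Fin m → 𝒴) (z : Fin m → 𝒵),
      pr p (fun ω => X ω = x ∧ Y ω = y ∧ Z ω = z)
        = pr p (fun ω => X ω = x ∧ Y ω = y) *
            ∏ j : Fin m, κ j (x (idx j)) (x (kdx j)) (y j) (z j)) :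
    condEnt p Z Y - condEnt p Z (fun ω => (X ω, Y ω))
      ≤ ∑ j : Fin m,
          (condEnt p (fun ω => Z ω j) (fun ω => Y ω j)
            - condEnt p (fun ω => Z ω j)
                (fun ω => (X ω (idx j), X ω (kdx j), Y ω j))) :=
  cond_indep_entropy_difference_subadditive_general n m p hp0 X Y Z idx kdx κ hdep hindep
end

section
/- For g_n as defined and a, b, γ with γ ≥ max(a,b) and n ≥ 2·max(a,b), the midpoint convexity defect satisfies g_n((a+b)/2) − g_n(a)/2 − g_n(b)/2 ≤ (a−b)²/(8nγ), and consequently C(n,2)·[g_n((a+b)/2) − g_n(a)/2 − g_n(b)/2] ≤ n(a−b)²/(16γ). -/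
/-!
Writing `φ(x) = (1 - x) log(1 - x) + x`, one has `g_n(c) = -(2γ/n) φ(c/(2γ)) + φ(c/n)`, so the
midpoint defect of `g_n` is `2γ/n` times the midpoint convexity gap of `φ` at `a/(2γ), b/(2γ)`
minus that gap at `a/n, b/n`. Both pairs of points lie in `(-∞, 1/2]`, where `0 < φ'' ≤ 2`:
the second gap is nonnegative because `φ` is convex, and the first is at most a quarter of the
squared distance of its points because `x² - φ` is convex.
-/

open Real Set

noncomputable def phi (x : ℝ) : ℝ := (1 - x) * log (1 - x) + x

noncomputable def midpointGap (f : ℝ → ℝ) (x y : ℝ) : ℝ := (f x + f y) / 2 - f ((x + y) / 2)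

lemma ConvexOn.midpointGap_nonneg {s : Set ℝ} {f : ℝ → ℝ} (hf : ConvexOn ℝ s f) {x y : ℝ}
    (hx : x ∈ s) (hy : y ∈ s) : 0 ≤ midpointGap f x y := by
  have h := hf.2 hx hy (by norm_num : (0 : ℝ) ≤ 1 / 2) (by norm_num : (0 : ℝ) ≤ 1 / 2)
    (by norm_num)
  rw [smul_eq_mul, smul_eq_mul, smul_eq_mul, smul_eq_mul,
    show (1 / 2 : ℝ) * x + 1 / 2 * y = (x + y) / 2 by ring] at h
  unfold midpointGap
  linarith

lemma midpointGap_le_of_convexOn_sq_sub {s : Set ℝ} {f : ℝ → ℝ}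
    (hf : ConvexOn ℝ s (fun x => x ^ 2 - f x)) {x y : ℝ} (hx : x ∈ s) (hy : y ∈ s) :
    midpointGap f x y ≤ (x - y) ^ 2 / 4 := by
  have h := hf.midpointGap_nonneg hx hy
  unfold midpointGap at h ⊢
  nlinarith

lemma midpointGap_comp_div (f : ℝ → ℝ) (s x y : ℝ) :
    midpointGap (fun c => f (c / s)) x y = midpointGap f (x / s) (y / s) := by
  simp only [midpointGap, add_div, div_div, mul_comm (2 : ℝ) s]

lemma hasDerivAt_phi {x : ℝ} (hx : x < 1) : HasDerivAt phi (-log (1 - x)) x := by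
  have h1 : 1 - x ≠ 0 := by linarith
  have hsub : HasDerivAt (fun y : ℝ => 1 - y) (-1) x := by
    simpa using (hasDerivAt_id x).const_sub 1
  refine ((hsub.mul (hsub.log h1)).add (hasDerivAt_id x)).congr_deriv ?_
  field_simp
  ring

lemma hasDerivAt_neg_log_one_sub {x : ℝ} (hx : x < 1) :
    HasDerivAt (fun y => -log (1 - y)) (1 - x)⁻¹ x := by
  have h1 : 1 - x ≠ 0 := by linarith
  have hsub : HasDerivAt (fun y : ℝ => 1 - y) (-1) x := by
    simpa using (hasDerivAt_id x).const_sub 1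
  refine (hsub.log h1).neg.congr_deriv ?_
  field_simp

lemma convexOn_phi : ConvexOn ℝ (Iio 1) phi := by
  refine convexOn_of_hasDerivWithinAt2_nonneg (f' := fun x => -log (1 - x))
    (f'' := fun x => (1 - x)⁻¹) (convex_Iio 1)
    (fun x hx => (hasDerivAt_phi hx).continuousAt.continuousWithinAt) ?_ ?_ ?_ <;>
    rw [interior_Iio]
  · exact fun x hx => (hasDerivAt_phi hx).hasDerivWithinAt
  · exact fun x hx => (hasDerivAt_neg_log_one_sub hx).hasDerivWithinAt
  · exact fun x hx => inv_nonneg.2 (sub_nonneg.2 (le_of_lt hx))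

lemma convexOn_sq_sub_phi : ConvexOn ℝ (Iic (1 / 2)) (fun x => x ^ 2 - phi x) := by
  have hlt {x : ℝ} (hx : x ≤ 1 / 2) : x < 1 := by linarith
  refine convexOn_of_hasDerivWithinAt2_nonneg (f' := fun x => 2 * x - -log (1 - x))
    (f'' := fun x => 2 - (1 - x)⁻¹) (convex_Iic _)
    (fun x hx => (((hasDerivAt_pow 2 x).sub (hasDerivAt_phi (hlt hx))).continuousAt
      ).continuousWithinAt) ?_ ?_ ?_ <;> rw [interior_Iic]
  · intro x hx
    refine (((hasDerivAt_pow 2 x).sub (hasDerivAt_phi (hlt hx.le))).congr_deriv ?_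
      ).hasDerivWithinAt
    ring
  · intro x hx
    refine ((((hasDerivAt_id x).const_mul 2).sub
      (hasDerivAt_neg_log_one_sub (hlt hx.le))).congr_deriv ?_).hasDerivWithinAt
    ring
  · intro x (hx : x < 1 / 2)
    rw [sub_nonneg, inv_le_comm₀ (by linarith) (by norm_num)]
    linarith

lemma midpointGap_phi_div_le {s x y : ℝ} (hs : 0 < s) (hx : 2 * x ≤ s) (hy : 2 * y ≤ s) :
    midpointGap (fun c => phi (c / s)) x y ≤ (x - y) ^ 2 / (4 * s ^ 2) := by
  rw [midpointGap_comp_div]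
  calc _ ≤ (x / s - y / s) ^ 2 / 4 := midpointGap_le_of_convexOn_sq_sub convexOn_sq_sub_phi
        (by rw [mem_Iic, div_le_iff₀ hs]; linarith) (by rw [mem_Iic, div_le_iff₀ hs]; linarith)
    _ = (x - y) ^ 2 / (4 * s ^ 2) := by field_simp

lemma midpointGap_phi_div_nonneg {s x y : ℝ} (hs : 0 < s) (hx : x < s) (hy : y < s) :
    0 ≤ midpointGap (fun c => phi (c / s)) x y := by
  rw [midpointGap_comp_div]
  exact convexOn_phi.midpointGap_nonneg (by rwa [mem_Iio, div_lt_one hs])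
    (by rwa [mem_Iio, div_lt_one hs])

theorem gn_midpoint_defect_general (a b γ : ℝ) (n : ℕ)
    (ha : 0 < a) (hγ : max a b ≤ γ) (hn : 2 * max a b ≤ (n : ℝ)) :
    let g : ℝ → ℝ := fun c =>
      -(2 * γ / n) * ((1 - c / (2 * γ)) * Real.log (1 - c / (2 * γ)) + c / (2 * γ))
        + ((1 - c / n) * Real.log (1 - c / n) + c / n)
    g ((a + b) / 2) - g a / 2 - g b / 2 ≤ (a - b) ^ 2 / (8 * n * γ)
      ∧ ((n : ℝ) * (n - 1) / 2) * (g ((a + b) / 2) - g a / 2 - g b / 2)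
          ≤ n * (a - b) ^ 2 / (16 * γ) := by
  intro g
  obtain ⟨haγ, hbγ⟩ := max_le_iff.1 hγ
  have hna : 2 * a ≤ n := by linarith [le_max_left a b]
  have hnb : 2 * b ≤ n := by linarith [le_max_right a b]
  have hγ0 : 0 < γ := by linarith
  have hn0 : (0 : ℝ) < n := by linarith
  have hsplit : g ((a + b) / 2) - g a / 2 - g b / 2
      = 2 * γ / n * midpointGap (fun c => phi (c / (2 * γ))) a b
        - midpointGap (fun c => phi (c / n)) a b := by
    simp only [g, midpointGap, phi]
    ring
  have hgap_γ := mul_le_mul_of_nonneg_left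
    (midpointGap_phi_div_le (s := 2 * γ) (x := a) (y := b) (by positivity) (by linarith)
      (by linarith))
    (by positivity : (0 : ℝ) ≤ 2 * γ / n)
  have hgap_n := midpointGap_phi_div_nonneg (x := a) (y := b) hn0 (by linarith) (by linarith)
  have hdefect : g ((a + b) / 2) - g a / 2 - g b / 2 ≤ (a - b) ^ 2 / (8 * n * γ) := by
    calc _ ≤ 2 * γ / n * ((a - b) ^ 2 / (4 * (2 * γ) ^ 2)) := by linarith
      _ = (a - b) ^ 2 / (8 * n * γ) := by field_simp; ring
  refine ⟨hdefect, ?_⟩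
  calc _ ≤ (n : ℝ) * (n - 1) / 2 * ((a - b) ^ 2 / (8 * n * γ)) :=
        mul_le_mul_of_nonneg_left hdefect (by rw [← Nat.cast_choose_two]; positivity)
    _ = (n - 1) * (a - b) ^ 2 / (16 * γ) := by field_simp; ring
    _ ≤ n * (a - b) ^ 2 / (16 * γ) := by gcongr; linarith

/-- Midpoint convexity defect bound for `g_n`: if `γ ≥ max(a,b)` and `n ≥ 2 max(a,b)` then
`g_n((a+b)/2) − g_n(a)/2 − g_n(b)/2 ≤ (a−b)²/(8nγ)`, and consequently
`C(n,2) [g_n((a+b)/2) − g_n(a)/2 − g_n(b)/2] ≤ n(a−b)²/(16γ)`. -/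
theorem gn_midpoint_defect (a b γ : ℝ) (n : ℕ)
    (ha : 0 < a) (hb : 0 < b) (hγ : max a b ≤ γ) (hn : 2 * max a b ≤ (n : ℝ)) :
    let g : ℝ → ℝ := fun c =>
      -(2 * γ / n) * ((1 - c / (2 * γ)) * Real.log (1 - c / (2 * γ)) + c / (2 * γ))
        + ((1 - c / n) * Real.log (1 - c / n) + c / n)
    g ((a + b) / 2) - g a / 2 - g b / 2 ≤ (a - b) ^ 2 / (8 * n * γ)
      ∧ ((n : ℝ) * (n - 1) / 2) * (g ((a + b) / 2) - g a / 2 - g b / 2)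
          ≤ n * (a - b) ^ 2 / (16 * γ) :=
  gn_midpoint_defect_general a b γ n ha hγ hn
end

section
/- For a binary-input symmetric-output channel W from {0,1} to finite 𝒴 and the encoded kernel Q(z|u) = W(z | u_1 ⊕ ⋯ ⊕ u_k) with k even, the operator Γ_l is convex on probability measures on {0,1}^l for every l ≥ 1. -/
/-!
Expanding in the Walsh characters `walsh w u = (-1)^{w ⬝ u}` of `(ZMod 2)^l` turns the sum over
`U` into a convolution power:
`Γ_l(ν) = |𝒴|⁻¹ 2^{-l} ∑_w F(g)(w) F(ν)(w)^k`, where `g s = ∑_z ∏_r (1 - W (s r) z)`.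
Each `F(ν)(w)` is linear in `ν`, so for even `k` every term is convex as soon as `F(g)(w) ≥ 0`.
Since `g` is a sum of products over coordinates, `F(g)(w) = ∑_z ∏_r φ_{w r}(z)` with
`φ_0 = 2 - W 0 - W 1 ≥ 0` and `φ_1 = W 1 - W 0`. If `w` has odd weight, the output involution
`σ` changes the sign of every summand, so `F(g)(w) = 0`; if `w` has even weight, every product
contains an even number of factors `φ_1`, so each summand is nonnegative.
-/

open Finset Matrix

theorem ConvexOn.sum {𝕜 E β ι : Type*} [Semiring 𝕜] [PartialOrder 𝕜] [AddCommMonoid E]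
    [AddCommMonoid β] [PartialOrder β] [IsOrderedAddMonoid β] [SMul 𝕜 E] [Module 𝕜 β]
    {s : Set E} (hs : Convex 𝕜 s) {t : Finset ι} {f : ι → E → β}
    (hf : ∀ i ∈ t, ConvexOn 𝕜 s (f i)) : ConvexOn 𝕜 s fun x => ∑ i ∈ t, f i x := by
  classical
  induction t using Finset.induction_on with
  | empty => simpa using convexOn_const 0 hs
  | insert i t hi ih =>
    simp only [sum_insert hi]
    exact (hf i (mem_insert_self i t)).add (ih fun j hj => hf j (mem_insert_of_mem hj))

namespace BisoGamma

lemma eq_zero_or_eq_one (a : ZMod 2) : a = 0 ∨ a = 1 := by decide +revert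

lemma sum_zmod_two {M : Type*} [AddCommMonoid M] (f : ZMod 2 → M) : ∑ a, f a = f 0 + f 1 :=
  Fin.sum_univ_two f

def sign (a : ZMod 2) : ℝ := if a = 0 then 1 else -1

lemma sign_add (a b : ZMod 2) : sign (a + b) = sign a * sign b := by
  rcases eq_zero_or_eq_one a with rfl | rfl <;> rcases eq_zero_or_eq_one b with rfl | rfl <;>
    simp [sign, show (1 : ZMod 2) + 1 = 0 from rfl]

lemma sign_sum {κ : Type*} (s : Finset κ) (a : κ → ZMod 2) :
    sign (∑ i ∈ s, a i) = ∏ i ∈ s, sign (a i) := by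
  classical
  induction s using Finset.induction_on with
  | empty => simp [sign]
  | insert i s hi ih => rw [sum_insert hi, prod_insert hi, sign_add, ih]

lemma sum_sign_mul (b : ZMod 2) : ∑ a, sign (a * b) = if b = 0 then 2 else 0 := by
  rw [sum_zmod_two]
  rcases eq_zero_or_eq_one b with rfl | rfl <;> norm_num [sign]

variable {ι : Type*} [Fintype ι]

lemma even_card_ne_zero_of_sum_eq_zero (w : ι → ZMod 2) (hw : ∑ r, w r = 0) :
    Even #{r | w r ≠ 0} := by
  rw [← ZMod.natCast_eq_zero_iff_even, natCast_card_filter]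
  refine (sum_congr rfl fun r _ => ?_).trans hw
  rcases eq_zero_or_eq_one (w r) with h | h <;> simp [h]

lemma prod_comp_nonneg_of_sum_eq_zero (f : ZMod 2 → ℝ) (hf : 0 ≤ f 0) (w : ι → ZMod 2)
    (hw : ∑ r, w r = 0) : 0 ≤ ∏ r, f (w r) := by
  have hcases : ∀ r, f (w r) = if w r = 0 then f 0 else f 1 := fun r => by
    rcases eq_zero_or_eq_one (w r) with h | h <;> simp [h]
  simp only [hcases, prod_ite, prod_const]
  exact mul_nonneg (pow_nonneg hf _) ((even_card_ne_zero_of_sum_eq_zero w hw).pow_nonneg _)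

def walsh (w u : ι → ZMod 2) : ℝ := sign (w ⬝ᵥ u)

lemma walsh_add_right (w u v : ι → ZMod 2) : walsh w (u + v) = walsh w u * walsh w v := by
  rw [walsh, dotProduct_add, sign_add, walsh, walsh]

lemma walsh_sum_right {κ : Type*} (w : ι → ZMod 2) (s : Finset κ) (u : κ → ι → ZMod 2) :
    walsh w (∑ i ∈ s, u i) = ∏ i ∈ s, walsh w (u i) := by
  rw [walsh, dotProduct_sum, sign_sum]
  rfl

section

variable [DecidableEq ι]

lemma sum_walsh (u : ι → ZMod 2) :
    ∑ w, walsh w u = if u = 0 then 2 ^ Fintype.card ι else 0 := by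
  simp only [walsh, dotProduct, sign_sum]
  rw [← Fintype.prod_sum fun r a => sign (a * u r)]
  simp only [sum_sign_mul, Fintype.prod_ite_zero, prod_const, card_univ, funext_iff,
    Pi.zero_apply]

lemma sum_walsh_add (s t : ι → ZMod 2) :
    ∑ w, walsh w (s + t) = if s = t then 2 ^ Fintype.card ι else 0 := by
  simp only [sum_walsh, add_eq_zero_iff_eq_neg, ZModModule.neg_eq_self]

/-- The Walsh–Fourier coefficient `F(f)(w)` of the paper. -/
def walshCoeff (w : ι → ZMod 2) : ((ι → ZMod 2) → ℝ) →ₗ[ℝ] ℝ where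
  toFun f := ∑ s, walsh w s * f s
  map_add' f g := by simp only [Pi.add_apply, mul_add, sum_add_distrib]
  map_smul' c f := by
    simp only [Pi.smul_apply, smul_eq_mul, mul_sum, RingHom.id_apply, mul_left_comm]

lemma walshCoeff_apply (w : ι → ZMod 2) (f : (ι → ZMod 2) → ℝ) :
    walshCoeff w f = ∑ s, walsh w s * f s := rfl

theorem sum_mul_prod_eq_walshCoeff (h ν : (ι → ZMod 2) → ℝ) (k : ℕ) :
    ∑ u : Fin k → ι → ZMod 2, h (∑ i, u i) * ∏ i, ν (u i)
      = (2 ^ Fintype.card ι)⁻¹ * ∑ w, walshCoeff w h * walshCoeff w ν ^ k := by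
  rw [eq_inv_mul_iff_mul_eq₀ (by positivity)]
  symm
  calc ∑ w, walshCoeff w h * walshCoeff w ν ^ k
      = ∑ w, ∑ u : Fin k → ι → ZMod 2, ∑ s,
          walsh w (s + ∑ i, u i) * (h s * ∏ i, ν (u i)) := by
        refine sum_congr rfl fun w _ => ?_
        rw [walshCoeff_apply, walshCoeff_apply, Fintype.sum_pow, sum_mul_sum, sum_comm]
        refine sum_congr rfl fun u _ => sum_congr rfl fun s _ => ?_
        rw [walsh_add_right, walsh_sum_right, prod_mul_distrib]
        ring
    _ = ∑ u : Fin k → ι → ZMod 2, ∑ s,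
          (∑ w, walsh w (s + ∑ i, u i)) * (h s * ∏ i, ν (u i)) := by
        rw [sum_comm]
        simp only [sum_mul]
        exact sum_congr rfl fun u _ => sum_comm
    _ = 2 ^ Fintype.card ι * ∑ u : Fin k → ι → ZMod 2, h (∑ i, u i) * ∏ i, ν (u i) := by
        simp only [sum_walsh_add, ite_mul, zero_mul, sum_ite_eq', mem_univ, if_true, mul_sum]

end

variable {𝒴 : Type*} (W : ZMod 2 → 𝒴 → ℝ)

def walshFactor (a : ZMod 2) (z : 𝒴) : ℝ := ∑ b, sign (a * b) * (1 - W b z)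

lemma walshFactor_zero (z : 𝒴) : walshFactor W 0 z = 2 - W 0 z - W 1 z := by
  rw [walshFactor, sum_zmod_two]
  norm_num [sign]
  ring

lemma walshFactor_comp_perm (σ : 𝒴 → 𝒴) (hflip : ∀ b y, W b (σ y) = W (b + 1) y)
    (a : ZMod 2) (z : 𝒴) : walshFactor W a (σ z) = sign a * walshFactor W a z := by
  rw [walshFactor, walshFactor, mul_sum, ← Equiv.sum_comp (Equiv.addRight 1)]
  refine sum_congr rfl fun b _ => ?_
  rw [Equiv.coe_addRight, hflip, add_assoc, show (1 : ZMod 2) + 1 = 0 from rfl, add_zero,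
    mul_add, mul_one, sign_add]
  ring

variable [Fintype 𝒴]

lemma sum_prod_walshFactor_eq_zero (σ : Equiv.Perm 𝒴)
    (hflip : ∀ b y, W b (σ y) = W (b + 1) y) (w : ι → ZMod 2) (hw : ∑ r, w r = 1) :
    ∑ z, ∏ r, walshFactor W (w r) z = 0 := by
  have hneg : ∑ z, ∏ r, walshFactor W (w r) (σ z) = -∑ z, ∏ r, walshFactor W (w r) z := by
    simp only [walshFactor_comp_perm W σ hflip, prod_mul_distrib, ← sign_sum, hw,
      show sign 1 = -1 from if_neg one_ne_zero, neg_one_mul, sum_neg_distrib]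
  rw [Equiv.sum_comp σ fun z => ∏ r, walshFactor W (w r) z] at hneg
  linarith

theorem sum_prod_walshFactor_nonneg (hW : ∀ b z, W b z ≤ 1) (σ : Equiv.Perm 𝒴)
    (hflip : ∀ b y, W b (σ y) = W (b + 1) y) (w : ι → ZMod 2) :
    0 ≤ ∑ z, ∏ r, walshFactor W (w r) z := by
  rcases eq_zero_or_eq_one (∑ r, w r) with hw | hw
  · refine sum_nonneg fun z _ => prod_comp_nonneg_of_sum_eq_zero (walshFactor W · z) ?_ w hw
    linarith [walshFactor_zero W z, hW 0 z, hW 1 z]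
  · exact (sum_prod_walshFactor_eq_zero W σ hflip w hw).ge

variable [DecidableEq ι]

lemma walshCoeff_channel (w : ι → ZMod 2) :
    walshCoeff w (fun s => ∑ z, ∏ r, (1 - W (s r) z)) = ∑ z, ∏ r, walshFactor W (w r) z := by
  simp only [walshCoeff_apply, mul_sum, walshFactor, Fintype.prod_sum]
  rw [sum_comm]
  refine sum_congr rfl fun z _ => sum_congr rfl fun s _ => ?_
  rw [walsh, dotProduct, sign_sum, prod_mul_distrib]

theorem sum_encoded_eq_walsh (k : ℕ) (ν : (ι → ZMod 2) → ℝ) :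
    ∑ U : ι → Fin k → ZMod 2, (∑ z, ∏ r, (1 - W (∑ i, U r i) z)) * ∏ i, ν (fun r => U r i)
      = (2 ^ Fintype.card ι)⁻¹ *
          ∑ w, (∑ z, ∏ r, walshFactor W (w r) z) * walshCoeff w ν ^ k := by
  simp_rw [← walshCoeff_channel, ← sum_mul_prod_eq_walshCoeff]
  exact Fintype.sum_equiv (Equiv.piComm fun _ _ => ZMod 2) _ _ fun U => by
    simp only [Equiv.piComm_apply, Finset.sum_apply]
    rfl

end BisoGamma

open BisoGamma in
theorem encoded_biso_gamma_convex_general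
    (𝒴 : Type) [Fintype 𝒴] (W : ZMod 2 → 𝒴 → ℝ)
    (hW0 : ∀ x y, 0 ≤ W x y) (hW1 : ∀ x, ∑ y, W x y = 1)
    (σ : Equiv.Perm 𝒴) (hσ : ∀ y, σ (σ y) = y) (hsym : ∀ y, W 0 (σ y) = W 1 y)
    (k l : ℕ) (hk : Even k) :
    ConvexOn ℝ {ν : (Fin l → ZMod 2) → ℝ | (∀ x, 0 ≤ ν x) ∧ ∑ x, ν x = 1}
      (fun ν => ((Fintype.card 𝒴 : ℝ))⁻¹ *
        ∑ U : Fin l → (Fin k → ZMod 2),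
          (∑ z : 𝒴, ∏ r : Fin l, (1 - W (∑ i, U r i) z)) *
            ∏ i : Fin k, ν (fun r => U r i)) := by
  have hW : ∀ b z, W b z ≤ 1 := fun b z =>
    hW1 b ▸ single_le_sum (fun y _ => hW0 b y) (mem_univ z)
  have hflip : ∀ b y, W b (σ y) = W (b + 1) y := fun b y => by
    rcases eq_zero_or_eq_one b with rfl | rfl
    · exact hsym y
    · rw [← hsym, hσ]
      rfl
  have hpow : ∀ w : Fin l → ZMod 2, ConvexOn ℝ Set.univ fun ν => walshCoeff w ν ^ k := fun w => by
    have h := (hk.convexOn_pow (𝕜 := ℝ)).comp_linearMap (walshCoeff w)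
    rw [Set.preimage_univ] at h
    exact h
  have hconv : ConvexOn ℝ Set.univ fun ν : (Fin l → ZMod 2) → ℝ =>
      (Fintype.card 𝒴 : ℝ)⁻¹ * ((2 ^ Fintype.card (Fin l))⁻¹ *
        ∑ w, (∑ z, ∏ r, walshFactor W (w r) z) * walshCoeff w ν ^ k) :=
    ((ConvexOn.sum convex_univ fun w _ => (hpow w).smul
      (sum_prod_walshFactor_nonneg W hW σ hflip w)).smul (by positivity)).smul (by positivity)
  refine (hconv.subset (Set.subset_univ _) (convex_stdSimplex ℝ _)).congr fun ν _ => ?_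
  rw [sum_encoded_eq_walsh]

/-- For a binary-input symmetric-output channel `W` (symmetry witnessed by an involution
`σ` of the output alphabet exchanging the two rows) and the encoded kernel
`Q(z|u) = W(z | u₁ ⊕ ⋯ ⊕ u_k)` with `k` even, the operator `Γ_l` is convex on
probability measures on `{0,1}^l` for every `l ≥ 1`. -/
theorem encoded_biso_gamma_convex
    (𝒴 : Type) [Fintype 𝒴] (W : ZMod 2 → 𝒴 → ℝ)
    (hW0 : ∀ x y, 0 ≤ W x y) (hW1 : ∀ x, ∑ y, W x y = 1)
    (σ : Equiv.Perm 𝒴) (hσ : ∀ y, σ (σ y) = y) (hsym : ∀ y, W 0 (σ y) = W 1 y)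
    (k l : ℕ) (hk : Even k) (hk1 : 1 ≤ k) (hl : 1 ≤ l) :
    ConvexOn ℝ {ν : (Fin l → ZMod 2) → ℝ | (∀ x, 0 ≤ ν x) ∧ ∑ x, ν x = 1}
      (fun ν => ((Fintype.card 𝒴 : ℝ))⁻¹ *
        ∑ U : Fin l → (Fin k → ZMod 2),
          (∑ z : 𝒴, ∏ r : Fin l, (1 - W (∑ i, U r i) z)) *
            ∏ i : Fin k, ν (fun r => U r i)) :=
  encoded_biso_gamma_convex_general 𝒴 W hW0 hW1 σ hσ hsym k l hk
end
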